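/- arXiv:1607.02433 — 3 statements merged into one kernel-verified Lean document; each statement's English description precedes it below -/
import Mathlib

section
/- With base B = 2 + i and digit set D = {0, 1, −1, i, −i}, every Gaussian integer z has a unique representation z = Σ_{k=0}^{m} d_k B^k with all d_k ∈ D and (if z ≠ 0) d_m ≠ 0; i.e., (B, D) is an integral numeration system for ℤ[i]. -/
/-- The value Σ_{k} d_k B^k of a (little-endian) digit list. -/
def gval (B : GaussianInt) (L : List GaussianInt) : GaussianInt :=
  L.foldr (fun d acc => d + B * acc) 0

/-!
A Gaussian integer `z ≠ 0` is written as `z = d + B q` with `d` the digit congruent to `z`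
modulo `B`; since the digits have norm at most `1` and `N(B) = 5 > 4`, the parallelogram law
gives `N(q) < N(z)`, so iterating terminates and yields an expansion. Uniqueness holds because
distinct digits are incongruent modulo `B`: two expansions of the same number share their
first digit, and cancelling `B` leaves two expansions of the same quotient.
-/

namespace GaussianNumeration

open Ideal Set

@[simp]
lemma gval_nil (B : GaussianInt) : gval B [] = 0 := rfl

@[simp]
lemma gval_cons (B d : GaussianInt) (L : List GaussianInt) :
    gval B (d :: L) = d + B * gval B L := rfl

def IsCanonical (D : Set GaussianInt) (L : List GaussianInt) : Prop :=
  (∀ d ∈ L, d ∈ D) ∧ L.getLast? ≠ some 0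

lemma isCanonical_nil (D : Set GaussianInt) : IsCanonical D [] := by
  simp [IsCanonical]

lemma isCanonical_cons_iff {D : Set GaussianInt} {d : GaussianInt} {L : List GaussianInt} :
    IsCanonical D (d :: L) ↔ d ∈ D ∧ IsCanonical D L ∧ (L = [] → d ≠ 0) := by
  rcases L with _ | ⟨b, L⟩
  · simp [IsCanonical]
  · simp only [IsCanonical, List.forall_mem_cons, List.getLast?_cons_cons, ne_eq, reduceCtorEq,
      IsEmpty.forall_iff, and_true]
    exact and_assoc

section Uniqueness

variable {B : GaussianInt} {D : Set GaussianInt}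

lemma eq_zero_of_dvd_of_injOn (h0 : 0 ∈ D) (hD : InjOn (Ideal.Quotient.mk (span {B})) D)
    {d : GaussianInt} (hd : d ∈ D) (hBd : B ∣ d) : d = 0 :=
  hD hd h0 (Ideal.Quotient.eq.2 (mem_span_singleton.2 (by simpa using hBd)))

lemma eq_nil_of_gval_eq_zero (hB : B ≠ 0) (h0 : 0 ∈ D)
    (hD : InjOn (Ideal.Quotient.mk (span {B})) D) {L : List GaussianInt} (hL : IsCanonical D L)
    (hval : gval B L = 0) : L = [] := by
  induction L with
  | nil => rfl
  | cons d t ih =>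
    obtain ⟨hd, ht, hlast⟩ := isCanonical_cons_iff.1 hL
    rw [gval_cons] at hval
    have hd0 : d = 0 := eq_zero_of_dvd_of_injOn h0 hD hd ⟨-gval B t, by linear_combination hval⟩
    subst hd0
    have htval : gval B t = 0 := by simpa [hB] using hval
    exact absurd rfl (hlast (ih ht htval))

theorem gval_injOn (hB : B ≠ 0) (h0 : 0 ∈ D) (hD : InjOn (Ideal.Quotient.mk (span {B})) D) :
    InjOn (gval B) {L | IsCanonical D L} := by
  intro L₁ hL₁ L₂ hL₂ hval
  induction L₁ generalizing L₂ with
  | nil => exact (eq_nil_of_gval_eq_zero hB h0 hD hL₂ hval.symm).symm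
  | cons d₁ t₁ ih =>
    rcases L₂ with _ | ⟨d₂, t₂⟩
    · exact eq_nil_of_gval_eq_zero hB h0 hD hL₁ hval
    obtain ⟨hd₁, ht₁, -⟩ := isCanonical_cons_iff.1 hL₁
    obtain ⟨hd₂, ht₂, -⟩ := isCanonical_cons_iff.1 hL₂
    simp only [gval_cons] at hval
    have hd : d₁ = d₂ := hD hd₁ hd₂ <| Ideal.Quotient.eq.2 <| mem_span_singleton.2
      ⟨gval B t₂ - gval B t₁, by linear_combination hval⟩
    subst hd
    have ht : gval B t₁ = gval B t₂ := mul_left_cancel₀ hB (by linear_combination hval)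
    rw [ih ht₁ ht₂ ht]

end Uniqueness

section Existence

variable {B : GaussianInt} {D : Set GaussianInt}

lemma norm_sub_le_two_mul (z w : GaussianInt) : (z - w).norm ≤ 2 * (z.norm + w.norm) := by
  simp only [Zsqrtd.norm_def, Zsqrtd.re_sub, Zsqrtd.im_sub]
  nlinarith [sq_nonneg (z.re + w.re), sq_nonneg (z.im + w.im)]

lemma norm_lt_of_eq_add_mul {z d q : GaussianInt} (hB : 4 < B.norm) (hd : d.norm ≤ 1)
    (hz : z ≠ 0) (h : z = d + B * q) : q.norm < z.norm := by
  have hz1 : 1 ≤ z.norm := GaussianInt.norm_pos.2 hz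
  have hq : B.norm * q.norm ≤ 4 * z.norm := by
    calc B.norm * q.norm = (z - d).norm := by rw [← Zsqrtd.norm_mul, h, add_sub_cancel_left]
      _ ≤ 2 * (z.norm + d.norm) := norm_sub_le_two_mul z d
      _ ≤ 4 * z.norm := by linarith
  nlinarith [GaussianInt.norm_nonneg q]

theorem exists_isCanonical_gval_eq (hB : 4 < B.norm)
    (hD : SurjOn (Ideal.Quotient.mk (span {B})) D univ) (hnorm : ∀ d ∈ D, d.norm ≤ 1)
    (z : GaussianInt) : ∃ L, IsCanonical D L ∧ gval B L = z := by
  induction hn : z.norm.natAbs using Nat.strong_induction_on generalizing z with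
  | _ n ih =>
    by_cases hz : z = 0
    · exact ⟨[], isCanonical_nil D, hz.symm⟩
    obtain ⟨d, hd, hdz⟩ := hD (mem_univ (Ideal.Quotient.mk (span {B}) z))
    obtain ⟨q, hq⟩ := mem_span_singleton.1 (Ideal.Quotient.eq.1 hdz.symm)
    have hzq : z = d + B * q := by linear_combination hq
    have hlt : q.norm < z.norm := norm_lt_of_eq_add_mul hB (hnorm d hd) hz hzq
    have hq0 := GaussianInt.norm_nonneg q
    obtain ⟨L, hL, rfl⟩ := ih q.norm.natAbs (by omega) q rfl
    refine ⟨d :: L, isCanonical_cons_iff.2 ⟨hd, hL, fun hnil hd0 => hz ?_⟩, hzq.symm⟩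
    simpa [hnil, hd0] using hzq

end Existence

-- Since `i ≡ -2 [mod 2 + i]`, the map `a + bi ↦ a - 2b` identifies `ℤ[i]/(2 + i)` with `ℤ/5`;
-- the digits `0, 1, -1, i, -i` go to `0, 1, -1, -2, 2`.
lemma two_add_i_dvd_iff (w : GaussianInt) :
    (⟨2, 1⟩ : GaussianInt) ∣ w ↔ 5 ∣ w.re - 2 * w.im := by
  constructor
  · rintro ⟨c, rfl⟩
    exact ⟨-c.im, by simp only [Zsqrtd.re_mul, Zsqrtd.im_mul]; ring⟩
  · rintro ⟨k, hk⟩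
    exact ⟨⟨2 * k + w.im, -k⟩, by ext <;> simp only [Zsqrtd.re_mul, Zsqrtd.im_mul] <;> omega⟩

abbrev digits : Set GaussianInt := {0, 1, -1, ⟨0, 1⟩, ⟨0, -1⟩}

lemma norm_le_one_of_mem_digits : ∀ d ∈ digits, d.norm ≤ 1 := by
  simp [Zsqrtd.norm_def]

lemma digits_injOn : InjOn (Ideal.Quotient.mk (span {(⟨2, 1⟩ : GaussianInt)})) digits := by
  intro d₁ hd₁ d₂ hd₂ h
  rw [Ideal.Quotient.eq, mem_span_singleton, two_add_i_dvd_iff] at h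
  simp only [digits, mem_insert_iff, mem_singleton_iff] at hd₁ hd₂
  rcases hd₁ with rfl | rfl | rfl | rfl | rfl <;> rcases hd₂ with rfl | rfl | rfl | rfl | rfl <;>
    first | rfl | simp at h

lemma digits_surjOn :
    SurjOn (Ideal.Quotient.mk (span {(⟨2, 1⟩ : GaussianInt)})) digits univ := by
  rintro x -
  obtain ⟨z, rfl⟩ := Ideal.Quotient.mk_surjective x
  obtain ⟨d, hd, h⟩ : ∃ d ∈ digits, 5 ∣ (d - z).re - 2 * (d - z).im := by
    have : (z.re - 2 * z.im) % 5 = 0 ∨ (z.re - 2 * z.im) % 5 = 1 ∨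
        (z.re - 2 * z.im) % 5 = 2 ∨ (z.re - 2 * z.im) % 5 = 3 ∨ (z.re - 2 * z.im) % 5 = 4 := by
      omega
    rcases this with h | h | h | h | h
    exacts [⟨0, by simp, by simp; omega⟩, ⟨1, by simp, by simp; omega⟩,
      ⟨⟨0, -1⟩, by simp, by simp; omega⟩, ⟨⟨0, 1⟩, by simp, by simp; omega⟩,
      ⟨-1, by simp, by simp; omega⟩]
  exact ⟨d, hd, Ideal.Quotient.eq.2 (mem_span_singleton.2 ((two_add_i_dvd_iff _).2 h))⟩

end GaussianNumeration

/-- With base B = 2 + i and digit set D = {0, 1, −1, i, −i}, every Gaussian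
integer has a unique finite expansion Σ_{k=0}^m d_k B^k with digits in D and
nonzero leading digit (the empty expansion representing 0): (B, D) is an
integral numeration system for ℤ[i]. -/
theorem gaussian_integral_numeration_system :
    ∀ z : GaussianInt, ∃! L : List GaussianInt,
      (∀ d ∈ L, d ∈ ({0, 1, -1, ⟨0, 1⟩, ⟨0, -1⟩} : Set GaussianInt)) ∧
        L.getLast? ≠ some 0 ∧ gval ⟨2, 1⟩ L = z := by
  intro z
  obtain ⟨L, hL, rfl⟩ := GaussianNumeration.exists_isCanonical_gval_eq
    (by norm_num [Zsqrtd.norm_def]) GaussianNumeration.digits_surjOn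
    GaussianNumeration.norm_le_one_of_mem_digits z
  refine ⟨L, ⟨hL.1, hL.2, rfl⟩, fun L' hL' => ?_⟩
  exact GaussianNumeration.gval_injOn (by decide) (by simp) GaussianNumeration.digits_injOn
    ⟨hL'.1, hL'.2.1⟩ hL hL'.2.2
end

section
/- Let ω₃ = (−1+i√3)/2 and consider the Eisenstein integers ℤ[ω₃]. With base B = −2 and digit set D = {0, 1, ω₃, ω₃²}, D is a complete residue system modulo B, and every Eisenstein integer has a unique finite expansion Σ_{k=0}^{m} d_k B^k with d_k ∈ D. -/
/-- ω₃ = (−1 + i√3)/2, a primitive cube root of unity. -/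
noncomputable def ω3 : ℂ := (-1 + Real.sqrt 3 * Complex.I) / 2

/-- The Eisenstein integers, as a subset of ℂ. -/
def IsEisenstein (z : ℂ) : Prop := ∃ x y : ℤ, z = (x : ℂ) + (y : ℂ) * ω3

/-- The value Σ_k d_k B^k of a (little-endian) digit list in ℂ. -/
def cval (B : ℂ) (L : List ℂ) : ℂ :=
  L.foldr (fun d acc => d + B * acc) 0

/-!
Write `z = x + y ω₃`. Since `ω₃² = -1 - ω₃`, the digits `0, 1, ω₃, ω₃²` have coordinates
`(0,0), (1,0), (0,1), (-1,-1)`, one in each parity class, and `z ≡ z' mod 2` exactly when the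
coordinates agree mod 2: so the digits form a complete residue system mod `-2`.
Uniqueness of expansions follows by peeling off the lowest digit. For existence, write
`z = d + (-2) q`; when `|z| > 1` we get `2|q| ≤ |z| + |d| ≤ |z| + 1 < 2|z|`, so the (integral)
norm decreases, and the Eisenstein integers of norm at most `1` are `0`, the digits and their
negatives.
-/

def IsAdmissible (D : Set ℂ) (L : List ℂ) : Prop :=
  (∀ d ∈ L, d ∈ D) ∧ L.getLast? ≠ some 0

namespace IsAdmissible

variable {D : Set ℂ} {d : ℂ} {t : List ℂ}

lemma nil : IsAdmissible D [] := ⟨by simp, by simp⟩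

lemma head_mem (h : IsAdmissible D (d :: t)) : d ∈ D := h.1 d List.mem_cons_self

lemma tail (h : IsAdmissible D (d :: t)) : IsAdmissible D t :=
  ⟨fun e he => h.1 e (List.mem_cons_of_mem d he), by cases t <;> simp_all [IsAdmissible]⟩

lemma cons (hd : d ∈ D) (ht : IsAdmissible D t) (hlast : t = [] → d ≠ 0) :
    IsAdmissible D (d :: t) := by
  refine ⟨fun e he => ?_, ?_⟩
  · rcases List.mem_cons.mp he with rfl | he
    exacts [hd, ht.1 e he]
  · cases t with
    | nil => simpa using hlast rfl
    | cons e t => simpa using ht.2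

end IsAdmissible

structure IsIncongruentDigitSet (P : Subring ℂ) (B : ℂ) (D : Set ℂ) : Prop where
  base_ne_zero : B ≠ 0
  base_mem : B ∈ P
  subset : D ⊆ P
  zero_mem : 0 ∈ D
  eq_of_sub_eq_mul : ∀ d ∈ D, ∀ d' ∈ D, ∀ q ∈ P, d - d' = B * q → d = d'

namespace IsIncongruentDigitSet

variable {P : Subring ℂ} {B : ℂ} {D : Set ℂ}

lemma cval_mem (hD : IsIncongruentDigitSet P B D) {L : List ℂ} (hL : ∀ d ∈ L, d ∈ D) :
    cval B L ∈ P := by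
  induction L with
  | nil => exact P.zero_mem
  | cons d t ih =>
    exact P.add_mem (hD.subset (hL d List.mem_cons_self))
      (P.mul_mem hD.base_mem (ih fun e he => hL e (List.mem_cons_of_mem d he)))

lemma eq_and_eq_of_add_mul_eq (hD : IsIncongruentDigitSet P B D) {d d' s s' : ℂ}
    (hd : d ∈ D) (hd' : d' ∈ D) (hs : s ∈ P) (hs' : s' ∈ P) (h : d + B * s = d' + B * s') :
    d = d' ∧ s = s' := by
  obtain rfl : d = d' :=
    hD.eq_of_sub_eq_mul d hd d' hd' (s' - s) (P.sub_mem hs' hs) (by linear_combination h)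
  exact ⟨rfl, mul_left_cancel₀ hD.base_ne_zero (add_left_cancel h)⟩

lemma eq_nil_of_cval_eq_zero (hD : IsIncongruentDigitSet P B D) :
    ∀ {L : List ℂ}, IsAdmissible D L → cval B L = 0 → L = []
  | [], _, _ => rfl
  | d :: t, hL, h => by
    obtain ⟨rfl, ht⟩ := hD.eq_and_eq_of_add_mul_eq hL.head_mem hD.zero_mem
      (hD.cval_mem hL.tail.1) P.zero_mem (h.trans (by ring) : d + B * cval B t = 0 + B * 0)
    obtain rfl := hD.eq_nil_of_cval_eq_zero hL.tail ht
    exact absurd rfl hL.2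

lemma eq_of_cval_eq (hD : IsIncongruentDigitSet P B D) :
    ∀ {L L' : List ℂ}, IsAdmissible D L → IsAdmissible D L' → cval B L = cval B L' → L = L'
  | [], _, _, hL', h => (hD.eq_nil_of_cval_eq_zero hL' h.symm).symm
  | _ :: _, [], hL, _, h => hD.eq_nil_of_cval_eq_zero hL h
  | _ :: _, _ :: _, hL, hL', h => by
    obtain ⟨rfl, ht⟩ := hD.eq_and_eq_of_add_mul_eq hL.head_mem hL'.head_mem
      (hD.cval_mem hL.tail.1) (hD.cval_mem hL'.tail.1) h
    rw [hD.eq_of_cval_eq hL.tail hL'.tail ht]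

end IsIncongruentDigitSet

open Complex

local notation "𝒟" => ({0, 1, ω3, ω3 ^ 2} : Set ℂ)

lemma ω3_re : ω3.re = -1 / 2 := by simp [ω3]

lemma ω3_im : ω3.im = √3 / 2 := by simp [ω3]

lemma ω3_sq : ω3 ^ 2 = -1 - ω3 := by
  have h3 : ((√3 : ℝ) : ℂ) ^ 2 = 3 := by norm_cast; simp
  simp only [ω3]
  linear_combination (I ^ 2 / 4) * h3 + (3 / 4) * I_sq

lemma norm_ω3 : ‖ω3‖ = 1 := by
  rw [norm_def, normSq_apply, ω3_re, ω3_im]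
  ring_nf
  norm_num

noncomputable def eis (x y : ℤ) : ℂ := x + y * ω3

lemma eis_inj {a b c d : ℤ} : eis a b = eis c d ↔ a = c ∧ b = d := by
  refine ⟨fun h => ?_, fun ⟨hac, hbd⟩ => hac ▸ hbd ▸ rfl⟩
  have him := congrArg im h
  have hre := congrArg re h
  simp only [eis, add_re, add_im, mul_re, mul_im, intCast_re, intCast_im, ω3_re, ω3_im] at him hre
  have hbd : (b : ℝ) = d := by
    have : 0 < √3 := by positivity
    nlinarith
  have hac : (a : ℝ) = c := by linarith
  exact ⟨by exact_mod_cast hac, by exact_mod_cast hbd⟩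

lemma neg_eis (x y : ℤ) : -eis x y = eis (-x) (-y) := by simp only [eis]; push_cast; ring

lemma normSq_eis (x y : ℤ) : normSq (eis x y) = ((x ^ 2 - x * y + y ^ 2 : ℤ) : ℝ) := by
  have h3 : √3 ^ 2 = 3 := by simp
  simp only [eis, normSq_apply, add_re, add_im, mul_re, mul_im, intCast_re, intCast_im, ω3_re,
    ω3_im]
  push_cast
  linear_combination ((y : ℝ) ^ 2 / 4) * h3

lemma mem_eisensteinDigits_iff {d : ℂ} :
    d ∈ 𝒟 ↔ d = eis 0 0 ∨ d = eis 1 0 ∨ d = eis 0 1 ∨ d = eis (-1) (-1) := by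
  simp only [eis, ω3_sq, Set.mem_insert_iff, Set.mem_singleton_iff]
  push_cast
  ring_nf

def eisensteinSubring : Subring ℂ where
  carrier := {z | IsEisenstein z}
  zero_mem' := ⟨0, 0, by simp⟩
  one_mem' := ⟨1, 0, by simp⟩
  add_mem' := by
    rintro _ _ ⟨a, b, rfl⟩ ⟨c, d, rfl⟩
    exact ⟨a + c, b + d, by push_cast; ring⟩
  neg_mem' := by
    rintro _ ⟨a, b, rfl⟩
    exact ⟨-a, -b, by push_cast; ring⟩
  mul_mem' := by
    rintro _ _ ⟨a, b, rfl⟩ ⟨c, d, rfl⟩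
    exact ⟨a * c - b * d, a * d + b * c - b * d, by
      push_cast; linear_combination (b * d : ℂ) * ω3_sq⟩

lemma mem_or_neg_mem_eisensteinDigits_of_norm_le_one {z : ℂ} (hz : z ∈ eisensteinSubring)
    (h : ‖z‖ ≤ 1) :
    z ∈ 𝒟 ∨ -z ∈ 𝒟 := by
  obtain ⟨x, y, rfl⟩ : ∃ x y : ℤ, z = eis x y := hz
  have hN : x ^ 2 - x * y + y ^ 2 ≤ 1 := by
    have : normSq (eis x y) ≤ 1 := by rw [normSq_eq_norm_sq]; nlinarith [norm_nonneg (eis x y)]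
    rw [normSq_eis] at this
    exact_mod_cast this
  obtain ⟨hx1, hx2⟩ : -1 ≤ x ∧ x ≤ 1 := by constructor <;> nlinarith [sq_nonneg (2 * y - x)]
  obtain ⟨hy1, hy2⟩ : -1 ≤ y ∧ y ≤ 1 := by constructor <;> nlinarith [sq_nonneg (2 * x - y)]
  simp only [mem_eisensteinDigits_iff, neg_eis, eis_inj]
  interval_cases x <;> interval_cases y <;> simp at hN ⊢

lemma exists_digit_add {z : ℂ} (hz : z ∈ eisensteinSubring) :
    ∃ d ∈ 𝒟, ∃ q ∈ eisensteinSubring, z = d + -2 * q := by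
  obtain ⟨x, y, rfl⟩ : ∃ x y : ℤ, z = eis x y := hz
  obtain ⟨a, b, hd, ⟨k, hk⟩, ⟨l, hl⟩⟩ : ∃ a b : ℤ, eis a b ∈ 𝒟 ∧ 2 ∣ x - a ∧ 2 ∣ y - b := by
    simp only [mem_eisensteinDigits_iff, eis_inj]
    rcases Int.emod_two_eq_zero_or_one x with hx | hx <;>
      rcases Int.emod_two_eq_zero_or_one y with hy | hy
    · exact ⟨0, 0, by simp, by omega, by omega⟩
    · exact ⟨0, 1, by simp, by omega, by omega⟩
    · exact ⟨1, 0, by simp, by omega, by omega⟩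
    · exact ⟨-1, -1, by simp, by omega, by omega⟩
  refine ⟨eis a b, hd, eis (-k) (-l), ⟨-k, -l, rfl⟩, ?_⟩
  rw [show x = a + 2 * k by omega, show y = b + 2 * l by omega]
  simp only [eis]
  push_cast
  ring

lemma isIncongruentDigitSet : IsIncongruentDigitSet eisensteinSubring (-2) 𝒟 where
  base_ne_zero := by norm_num
  base_mem := ⟨-2, 0, by simp⟩
  subset := by
    rintro d hd
    rw [mem_eisensteinDigits_iff] at hd
    rcases hd with rfl | rfl | rfl | rfl <;> exact ⟨_, _, rfl⟩
  zero_mem := by simp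
  eq_of_sub_eq_mul d hd d' hd' q hq h := by
    obtain ⟨x, y, rfl⟩ : ∃ x y : ℤ, q = eis x y := hq
    have key : ∀ a b c e : ℤ,
        eis a b - eis c e = -2 * eis x y ↔ a - c = -2 * x ∧ b - e = -2 * y := by
      intro a b c e
      rw [← eis_inj]
      simp only [eis]
      push_cast
      constructor <;> intro h <;> linear_combination h
    rw [mem_eisensteinDigits_iff] at hd hd'
    rcases hd with rfl | rfl | rfl | rfl <;> rcases hd' with rfl | rfl | rfl | rfl <;>
      first | rfl | (rw [key] at h; omega)

lemma norm_le_one_of_mem_eisensteinDigits {d : ℂ} (hd : d ∈ 𝒟) : ‖d‖ ≤ 1 := by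
  rcases hd with rfl | rfl | rfl | rfl <;> simp [norm_ω3]

lemma norm_lt_of_eq_add_neg_two_mul {z d q : ℂ} (hz : 1 < ‖z‖) (hd : ‖d‖ ≤ 1)
    (h : z = d + -2 * q) : ‖q‖ < ‖z‖ := by
  have : 2 * ‖q‖ ≤ ‖z‖ + ‖d‖ :=
    calc 2 * ‖q‖ = ‖z - d‖ := by rw [h]; simp
      _ ≤ ‖z‖ + ‖d‖ := norm_sub_le z d
  linarith

lemma exists_normSq_eq_natCast {z : ℂ} (hz : z ∈ eisensteinSubring) :
    ∃ n : ℕ, normSq z = n := by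
  obtain ⟨x, y, rfl⟩ : ∃ x y : ℤ, z = eis x y := hz
  have hN : 0 ≤ x ^ 2 - x * y + y ^ 2 := by nlinarith [sq_nonneg (2 * x - y)]
  exact ⟨(x ^ 2 - x * y + y ^ 2).toNat, by rw [normSq_eis, ← Int.toNat_of_nonneg hN]; rfl⟩

lemma exists_isAdmissible_cval_eq {z : ℂ} (hz : z ∈ eisensteinSubring) :
    ∃ L, IsAdmissible 𝒟 L ∧ cval (-2) L = z := by
  obtain ⟨n, hn⟩ := exists_normSq_eq_natCast hz
  induction n using Nat.strong_induction_on generalizing z with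
  | _ n ih =>
  by_cases hz0 : z = 0
  · exact ⟨[], IsAdmissible.nil, hz0.symm⟩
  by_cases hsmall : ‖z‖ ≤ 1
  · rcases mem_or_neg_mem_eisensteinDigits_of_norm_le_one hz hsmall with hd | hd
    · exact ⟨[z], IsAdmissible.nil.cons hd fun _ => hz0, by simp [cval]⟩
    -- a unit that is not a digit is the negative of one, and `-d = d + (-2) * d`
    · refine ⟨[-z, -z], (IsAdmissible.nil.cons hd fun _ => neg_ne_zero.mpr hz0).cons hd
        (by simp), by simp [cval]; ring⟩
  obtain ⟨d, hd, q, hq, rfl⟩ := exists_digit_add hz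
  obtain ⟨m, hm⟩ := exists_normSq_eq_natCast hq
  have hlt : m < n := by
    have hq_lt := norm_lt_of_eq_add_neg_two_mul (not_le.mp hsmall)
      (norm_le_one_of_mem_eisensteinDigits hd) rfl
    have : normSq q < normSq (d + -2 * q) := by
      rw [normSq_eq_norm_sq, normSq_eq_norm_sq]
      gcongr
    exact_mod_cast hm ▸ hn ▸ this
  obtain ⟨L, hL, rfl⟩ := ih m hlt hq hm
  refine ⟨d :: L, hL.cons hd ?_, rfl⟩
  rintro rfl
  simpa [cval] using hz0

/-- With base B = −2 and digit set D = {0, 1, ω₃, ω₃²}, D is a complete residue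
system modulo B in the Eisenstein integers, and every Eisenstein integer has a
unique finite expansion Σ_{k=0}^m d_k B^k with digits in D (nonzero leading
digit, the empty expansion representing 0). -/
theorem eisenstein_base_neg_two :
    (∀ z : ℂ, IsEisenstein z → ∃! d : ℂ,
      d ∈ ({0, 1, ω3, ω3 ^ 2} : Set ℂ) ∧
        ∃ q : ℂ, IsEisenstein q ∧ z - d = (-2) * q) ∧
    (∀ z : ℂ, IsEisenstein z → ∃! L : List ℂ,
      (∀ d ∈ L, d ∈ ({0, 1, ω3, ω3 ^ 2} : Set ℂ)) ∧
        L.getLast? ≠ some 0 ∧ cval (-2) L = z) := by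
  refine ⟨fun z hz => ?_, fun z hz => ?_⟩
  · obtain ⟨d, hd, q, hq, rfl⟩ := exists_digit_add hz
    refine ⟨d, ⟨hd, q, hq, by ring⟩, fun d' ⟨hd', q', hq', h⟩ => ?_⟩
    exact isIncongruentDigitSet.eq_of_sub_eq_mul d' hd' d hd (q - q')
      (eisensteinSubring.sub_mem hq hq') (by linear_combination -h)
  · obtain ⟨L, hL, rfl⟩ := exists_isAdmissible_cval_eq hz
    exact ⟨L, ⟨hL.1, hL.2, rfl⟩, fun L' ⟨h1, h2, h3⟩ =>
      isIncongruentDigitSet.eq_of_cval_eq ⟨h1, h2⟩ hL h3⟩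
end

section
/- Let B = 3 + 2i ∈ ℤ[i]. Then N(B) = 13 and the set D = {0, ±1, ±i, ±2, ±2i, 2+i, −2−i, 1−2i, −1+2i} is a complete residue system modulo B in the Gaussian integers. -/
/-!
Since `5 ^ 2 ≡ -1 (mod 13)`, sending `i ↦ 5` gives a ring map `ℤ[i] → ZMod 13`, and its kernel is
exactly the ideal `(3 + 2i)` because `3 + 2 * 5 ≡ 0`. A finite set is then a complete residue
system modulo `3 + 2i` as soon as this map is a bijection from it onto `ZMod 13`, which is a finite
check.
-/

theorem existsUnique_dvd_sub_of_bijOn {R S : Type*} [CommRing R] [Ring S] (φ : R →+* S) {b : R}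
    (hker : RingHom.ker φ = Ideal.span {b}) {D : Set R} (hD : Set.BijOn φ D Set.univ) (z : R) :
    ∃! d, d ∈ D ∧ b ∣ z - d := by
  have hdvd : ∀ d, b ∣ z - d ↔ φ d = φ z := fun d => by
    rw [← Ideal.mem_span_singleton, ← hker, RingHom.mem_ker, map_sub, sub_eq_zero, eq_comm]
  simp only [hdvd]
  obtain ⟨d, hd, hφd⟩ := hD.surjOn (Set.mem_univ (φ z))
  exact ⟨d, ⟨hd, hφd⟩, fun d' ⟨hd', hφd'⟩ => hD.injOn hd' hd (hφd'.trans hφd.symm)⟩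

namespace GaussianInt

def toZModThirteen : GaussianInt →+* ZMod 13 := Zsqrtd.lift ⟨5, by decide⟩

theorem toZModThirteen_apply (w : GaussianInt) :
    toZModThirteen w = ((w.re + 5 * w.im : ℤ) : ZMod 13) := by
  rw [toZModThirteen, Zsqrtd.lift_apply_apply]
  push_cast
  ring

theorem ker_toZModThirteen : RingHom.ker toZModThirteen = Ideal.span {⟨3, 2⟩} := by
  ext w
  rw [RingHom.mem_ker, Ideal.mem_span_singleton, toZModThirteen_apply,
    ZMod.intCast_zmod_eq_zero_iff_dvd]
  constructor
  · rintro ⟨k, hk⟩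
    push_cast at hk
    -- `w = (w.re + 5 * w.im) + w.im * (i - 5)`, where `13 = (3 + 2i)(3 - 2i)` and
    -- `i - 5 = (3 + 2i)(-1 + i)`.
    refine ⟨⟨3 * k - w.im, w.im - 2 * k⟩, ?_⟩
    ext <;> simp only [Zsqrtd.re_mul, Zsqrtd.im_mul] <;> linarith
  · rintro ⟨c, rfl⟩
    exact ⟨c.re + c.im, by simp only [Zsqrtd.re_mul, Zsqrtd.im_mul]; push_cast; ring⟩

theorem bijOn_toZModThirteen_digits :
    Set.BijOn toZModThirteen
      (({0, 1, -1, ⟨0, 1⟩, ⟨0, -1⟩, 2, -2, ⟨0, 2⟩, ⟨0, -2⟩,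
          ⟨2, 1⟩, ⟨-2, -1⟩, ⟨1, -2⟩, ⟨-1, 2⟩} : Finset GaussianInt) : Set GaussianInt)
      Set.univ := by
  refine ⟨Set.mapsTo_univ _ _, by decide, ?_⟩
  rw [Set.SurjOn, ← Finset.coe_image, ← Finset.coe_univ, Finset.coe_subset]
  decide

end GaussianInt

/-- B = 3 + 2i has norm 13 and
D = {0, ±1, ±i, ±2, ±2i, 2+i, −2−i, 1−2i, −1+2i} is a complete residue system
modulo B in the Gaussian integers. -/
theorem gaussian_R13_1_crs :
    Zsqrtd.norm (⟨3, 2⟩ : GaussianInt) = 13 ∧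
    (∀ z : GaussianInt, ∃! d : GaussianInt,
      d ∈ ({0, 1, -1, ⟨0, 1⟩, ⟨0, -1⟩, 2, -2, ⟨0, 2⟩, ⟨0, -2⟩,
            ⟨2, 1⟩, ⟨-2, -1⟩, ⟨1, -2⟩, ⟨-1, 2⟩} : Set GaussianInt) ∧
        (⟨3, 2⟩ : GaussianInt) ∣ (z - d)) := by
  refine ⟨rfl, fun z => ?_⟩
  simpa only [Finset.coe_insert, Finset.coe_singleton] using
    existsUnique_dvd_sub_of_bijOn _ GaussianInt.ker_toZModThirteen
      GaussianInt.bijOn_toZModThirteen_digits z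
end
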